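/- Let μ₁ and μ₂ be Borel probability measures on [0,1]^d with cumulative distribution functions H₁ and H₂, and suppose |H₁(u) − H₂(u)| ≤ δ for all u ∈ [0,1]^d, where δ ≥ 0. Then for every weight vector w = (w₁,…,w_d) ∈ (0,1]^d with w₁ + ⋯ + w_d = 1, | ∫_{[0,1]^d} ν_w(u) dμ₁(u) − ∫_{[0,1]^d} ν_w(u) dμ₂(u) | ≤ 2δ. -/

import Mathlib

/-!
By the layer-cake formula, a `[0, 1]`-valued `f` has `∫ f dμ = ∫₀¹ (1 - μ {f ≤ t}) dt`, so two
measures giving `δ`-close masses to the sublevel sets of `f` give `δ`-close integrals of `f`.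
On the unit cube the sublevel sets of `max_i u_i ^ (1 / w_i)` and of each `u_i ^ (1 / w_i)` are
lower orthants, whose masses are values of the cdf. So the maximum contributes at most `δ`, and
the average of the `d` coordinate powers at most `(1 / d) · d δ = δ`.
-/

open MeasureTheory Finset

/-- The multivariate `w`-madogram integrand
`ν_w(u) = max_i uᵢ^(1/wᵢ) − (1/d) Σᵢ uᵢ^(1/wᵢ)`. -/
noncomputable def nuW (d : ℕ) (hd : 0 < d) (w u : Fin d → ℝ) : ℝ :=
  (Finset.univ.sup' (Finset.univ_nonempty_iff.mpr (Fin.pos_iff_nonempty.mp hd))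
      fun i => u i ^ (1 / w i)) -
    (1 / (d : ℝ)) * ∑ i, u i ^ (1 / w i)

/-- Cumulative distribution function of a measure on `[0,1]^d ⊆ ℝ^d`. -/
noncomputable def cdf {d : ℕ} (μ : Measure (Fin d → ℝ)) (u : Fin d → ℝ) : ℝ :=
  (μ {v | ∀ i, v i ≤ u i}).toReal

open Set

section LayerCake

variable {α : Type*} [MeasurableSpace α] {μ ν : Measure α} {f : α → ℝ}

lemma integrable_of_ae_mem_Icc [IsFiniteMeasure μ] (hf : Measurable f)
    (hf01 : ∀ᵐ x ∂μ, f x ∈ Icc (0 : ℝ) 1) : Integrable f μ :=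
  Integrable.of_bound hf.aestronglyMeasurable 1 <| hf01.mono fun x hx => by
    rw [Real.norm_eq_abs, abs_of_nonneg hx.1]; exact hx.2

lemma integral_eq_integral_Ioc_one_sub_measureReal_le [IsProbabilityMeasure μ]
    (hf : Measurable f) (hf01 : ∀ᵐ x ∂μ, f x ∈ Icc (0 : ℝ) 1) :
    ∫ x, f x ∂μ = ∫ t in Ioc (0 : ℝ) 1, (1 - μ.real {x | f x ≤ t}) := by
  rw [(integrable_of_ae_mem_Icc hf hf01).integral_eq_integral_meas_lt
      (hf01.mono fun x hx => hx.1),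
    setIntegral_eq_of_subset_of_ae_sdiff_eq_zero nullMeasurableSet_Ioi Ioc_subset_Ioi_self]
  · refine setIntegral_congr_fun measurableSet_Ioc fun t _ => ?_
    rw [← probReal_compl_eq_one_sub (measurableSet_le hf measurable_const)]
    simp only [compl_ofPred, not_le]
  · refine Filter.Eventually.of_forall fun t ht => ?_
    have h1t : 1 < t := by simpa using ht
    have : μ {x | t < f x} = 0 :=
      measure_mono_null (fun x hx => (h1t.trans hx).not_ge)
        (ae_iff.mp (hf01.mono fun x hx => hx.2))
    simp [measureReal_def, this]

lemma integrableOn_measureReal_sublevel [IsFiniteMeasure μ] (a b : ℝ) :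
    IntegrableOn (fun t => μ.real {x | f x ≤ t}) (Icc a b) :=
  have hmono : Monotone fun t => μ.real {x | f x ≤ t} := fun _ _ hst =>
    measureReal_mono fun _ hx => le_trans hx hst
  (hmono.monotoneOn _).integrableOn_isCompact isCompact_Icc

lemma abs_integral_sub_integral_le_of_sublevel [IsProbabilityMeasure μ]
    [IsProbabilityMeasure ν] (hf : Measurable f) (hfμ : ∀ᵐ x ∂μ, f x ∈ Icc (0 : ℝ) 1)
    (hfν : ∀ᵐ x ∂ν, f x ∈ Icc (0 : ℝ) 1) {δ : ℝ}
    (hclose : ∀ t ∈ Ioc (0 : ℝ) 1, |μ.real {x | f x ≤ t} - ν.real {x | f x ≤ t}| ≤ δ) :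
    |∫ x, f x ∂μ - ∫ x, f x ∂ν| ≤ δ := by
  have hint (ρ : Measure α) [IsFiniteMeasure ρ] :
      IntegrableOn (fun t => 1 - ρ.real {x | f x ≤ t}) (Ioc (0 : ℝ) 1) :=
    (integrableOn_const measure_Ioc_lt_top.ne).sub
      ((integrableOn_measureReal_sublevel 0 1).mono_set Ioc_subset_Icc_self)
  rw [integral_eq_integral_Ioc_one_sub_measureReal_le hf hfμ,
    integral_eq_integral_Ioc_one_sub_measureReal_le hf hfν,
    ← integral_sub (hint μ) (hint ν), ← Real.norm_eq_abs]
  calc _ ≤ δ * volume.real (Ioc (0 : ℝ) 1) :=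
        norm_setIntegral_le_of_norm_le_const measure_Ioc_lt_top fun t ht => by
          rw [Real.norm_eq_abs, sub_sub_sub_cancel_left, abs_sub_comm]
          exact hclose t ht
    _ = δ := by simp

end LayerCake

section Madogram

variable {d : ℕ} {w : Fin d → ℝ}

lemma rpow_one_div_le_iff {x t a : ℝ} (hx : 0 ≤ x) (ht : 0 ≤ t) (ha : 0 < a) :
    x ^ (1 / a) ≤ t ↔ x ≤ t ^ a := by
  rw [one_div, Real.rpow_inv_le_iff_of_pos hx ht ha]

lemma rpow_mem_Icc_zero_one {x a : ℝ} (hx : x ∈ Icc (0 : ℝ) 1) (ha : 0 ≤ a) :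
    x ^ a ∈ Icc (0 : ℝ) 1 :=
  ⟨Real.rpow_nonneg hx.1 a, Real.rpow_le_one hx.1 hx.2 ha⟩

lemma measureReal_sup'_rpow_le_eq_cdf {μ : Measure (Fin d → ℝ)} (hμ : ∀ᵐ u ∂μ, 0 ≤ u)
    (hw : ∀ i, 0 < w i) (hne : (univ : Finset (Fin d)).Nonempty) {t : ℝ} (ht : 0 ≤ t) :
    μ.real {u | univ.sup' hne (fun i => u i ^ (1 / w i)) ≤ t} = cdf μ (fun i => t ^ w i) := by
  refine measureReal_congr (Filter.eventuallyEq_set.mpr (hμ.mono fun u hu => ?_))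
  simp only [mem_ofPred_eq, Finset.sup'_le_iff, Finset.mem_univ, true_implies]
  exact forall_congr' fun i => rpow_one_div_le_iff (hu i) ht (hw i)

lemma measureReal_rpow_le_eq_cdf {μ : Measure (Fin d → ℝ)} (hμ : ∀ᵐ u ∂μ, u ∈ Set.Icc 0 1)
    {i : Fin d} (hw : 0 < w i) {t : ℝ} (ht : 0 ≤ t) :
    μ.real {u | u i ^ (1 / w i) ≤ t} = cdf μ (Function.update 1 i (t ^ w i)) := by
  refine measureReal_congr (Filter.eventuallyEq_set.mpr (hμ.mono fun u hu => ?_))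
  simp only [mem_ofPred_eq, rpow_one_div_le_iff (hu.1 i) ht hw]
  constructor
  · intro h j
    rcases eq_or_ne j i with rfl | hj
    · simpa using h
    · simpa [hj] using hu.2 j
  · intro h
    simpa using h i

lemma measurable_sup'_rpow (hne : (univ : Finset (Fin d)).Nonempty) :
    Measurable fun u : Fin d → ℝ => univ.sup' hne fun i => u i ^ (1 / w i) := by
  convert Finset.measurable_sup' hne
    (f := fun i (u : Fin d → ℝ) => u i ^ (1 / w i)) fun i _ => by fun_prop
  exact (Finset.sup'_apply hne (fun i (u : Fin d → ℝ) => u i ^ (1 / w i)) _).symm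

lemma sup'_rpow_mem_Icc {u : Fin d → ℝ} (hu : u ∈ Set.Icc 0 1) (hw : ∀ i, 0 < w i)
    (hne : (univ : Finset (Fin d)).Nonempty) :
    univ.sup' hne (fun i => u i ^ (1 / w i)) ∈ Set.Icc (0 : ℝ) 1 := by
  have hmem i : u i ^ (1 / w i) ∈ Set.Icc (0 : ℝ) 1 :=
    rpow_mem_Icc_zero_one ⟨hu.1 i, hu.2 i⟩ (one_div_nonneg.mpr (hw i).le)
  obtain ⟨i, -⟩ := hne
  exact ⟨(hmem i).1.trans (Finset.le_sup' (fun i => u i ^ (1 / w i)) (Finset.mem_univ i)),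
    Finset.sup'_le _ _ fun j _ => (hmem j).2⟩

variable {μ₁ μ₂ : Measure (Fin d → ℝ)} [IsProbabilityMeasure μ₁] [IsProbabilityMeasure μ₂]
  {δ : ℝ}

lemma abs_integral_sup'_rpow_sub_le (hμ₁ : ∀ᵐ u ∂μ₁, u ∈ Set.Icc 0 1)
    (hμ₂ : ∀ᵐ u ∂μ₂, u ∈ Set.Icc 0 1)
    (hclose : ∀ u ∈ Set.Icc 0 1, |cdf μ₁ u - cdf μ₂ u| ≤ δ) (hw : ∀ i, 0 < w i)
    (hne : (univ : Finset (Fin d)).Nonempty) :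
    |∫ u, univ.sup' hne (fun i => u i ^ (1 / w i)) ∂μ₁ -
      ∫ u, univ.sup' hne (fun i => u i ^ (1 / w i)) ∂μ₂| ≤ δ := by
  refine abs_integral_sub_integral_le_of_sublevel (measurable_sup'_rpow hne)
    (hμ₁.mono fun u hu => sup'_rpow_mem_Icc hu hw hne)
    (hμ₂.mono fun u hu => sup'_rpow_mem_Icc hu hw hne) fun t ht => ?_
  rw [measureReal_sup'_rpow_le_eq_cdf (hμ₁.mono fun _ hu => hu.1) hw hne ht.1.le,
    measureReal_sup'_rpow_le_eq_cdf (hμ₂.mono fun _ hu => hu.1) hw hne ht.1.le]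
  exact hclose _ ⟨fun i => (rpow_mem_Icc_zero_one ⟨ht.1.le, ht.2⟩ (hw i).le).1,
    fun i => (rpow_mem_Icc_zero_one ⟨ht.1.le, ht.2⟩ (hw i).le).2⟩

lemma abs_integral_rpow_sub_le (hμ₁ : ∀ᵐ u ∂μ₁, u ∈ Set.Icc 0 1)
    (hμ₂ : ∀ᵐ u ∂μ₂, u ∈ Set.Icc 0 1)
    (hclose : ∀ u ∈ Set.Icc 0 1, |cdf μ₁ u - cdf μ₂ u| ≤ δ) {i : Fin d} (hw : 0 < w i) :
    |∫ u, u i ^ (1 / w i) ∂μ₁ - ∫ u, u i ^ (1 / w i) ∂μ₂| ≤ δ := by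
  have hmem {u : Fin d → ℝ} (hu : u ∈ Set.Icc 0 1) : u i ^ (1 / w i) ∈ Set.Icc (0 : ℝ) 1 :=
    rpow_mem_Icc_zero_one ⟨hu.1 i, hu.2 i⟩ (one_div_nonneg.mpr hw.le)
  refine abs_integral_sub_integral_le_of_sublevel (by fun_prop)
    (hμ₁.mono fun u hu => hmem hu) (hμ₂.mono fun u hu => hmem hu) fun t ht => ?_
  rw [measureReal_rpow_le_eq_cdf hμ₁ hw ht.1.le, measureReal_rpow_le_eq_cdf hμ₂ hw ht.1.le]
  have hti := rpow_mem_Icc_zero_one ⟨ht.1.le, ht.2⟩ hw.le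
  exact hclose _ ⟨le_update_iff.mpr ⟨hti.1, fun _ _ => zero_le_one⟩,
    update_le_iff.mpr ⟨hti.2, fun _ _ => le_rfl⟩⟩

lemma integral_nuW {μ : Measure (Fin d → ℝ)} [IsFiniteMeasure μ] (hd : 0 < d)
    (hμ : ∀ᵐ u ∂μ, u ∈ Set.Icc 0 1) (hw : ∀ i, 0 < w i)
    (hne : (univ : Finset (Fin d)).Nonempty) :
    ∫ u, nuW d hd w u ∂μ = ∫ u, univ.sup' hne (fun i => u i ^ (1 / w i)) ∂μ -
      1 / d * ∑ i, ∫ u, u i ^ (1 / w i) ∂μ := by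
  have hcoord i : Integrable (fun u : Fin d → ℝ => u i ^ (1 / w i)) μ :=
    integrable_of_ae_mem_Icc (by fun_prop) <| hμ.mono fun u hu =>
      rpow_mem_Icc_zero_one ⟨hu.1 i, hu.2 i⟩ (one_div_nonneg.mpr (hw i).le)
  have hsup : Integrable (fun u => univ.sup' hne fun i => u i ^ (1 / w i)) μ :=
    integrable_of_ae_mem_Icc (measurable_sup'_rpow hne)
      (hμ.mono fun u hu => sup'_rpow_mem_Icc hu hw hne)
  rw [← integral_finsetSum _ fun i _ => hcoord i, ← integral_const_mul,
    ← integral_sub hsup ((integrable_finsetSum _ fun i _ => hcoord i).const_mul _)]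
  rfl

lemma abs_integral_nuW_sub_le (hd : 0 < d) (hμ₁ : ∀ᵐ u ∂μ₁, u ∈ Set.Icc 0 1)
    (hμ₂ : ∀ᵐ u ∂μ₂, u ∈ Set.Icc 0 1)
    (hclose : ∀ u ∈ Set.Icc 0 1, |cdf μ₁ u - cdf μ₂ u| ≤ δ) (hw : ∀ i, 0 < w i) :
    |∫ u, nuW d hd w u ∂μ₁ - ∫ u, nuW d hd w u ∂μ₂| ≤ 2 * δ := by
  have hne : (univ : Finset (Fin d)).Nonempty :=
    univ_nonempty_iff.mpr (Fin.pos_iff_nonempty.mp hd)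
  have hsum : |∑ i, ∫ u, u i ^ (1 / w i) ∂μ₁ - ∑ i, ∫ u, u i ^ (1 / w i) ∂μ₂| ≤ d * δ :=
    calc _ ≤ ∑ i, |∫ u, u i ^ (1 / w i) ∂μ₁ - ∫ u, u i ^ (1 / w i) ∂μ₂| := by
          rw [← sum_sub_distrib]; exact abs_sum_le_sum_abs _ _
      _ ≤ ∑ _i : Fin d, δ :=
          sum_le_sum fun i _ => abs_integral_rpow_sub_le hμ₁ hμ₂ hclose (hw i)
      _ = d * δ := by simp
  rw [integral_nuW hd hμ₁ hw hne, integral_nuW hd hμ₂ hw hne]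
  generalize ∑ i, ∫ u, u i ^ (1 / w i) ∂μ₁ = s₁, ∑ i, ∫ u, u i ^ (1 / w i) ∂μ₂ = s₂ at hsum ⊢
  calc _ = |(∫ u, univ.sup' hne (fun i => u i ^ (1 / w i)) ∂μ₁ -
          ∫ u, univ.sup' hne (fun i => u i ^ (1 / w i)) ∂μ₂) - 1 / d * (s₁ - s₂)| := by
        congr 1; ring
    _ ≤ δ + δ := by
        refine (abs_sub _ _).trans
          (add_le_add (abs_integral_sup'_rpow_sub_le hμ₁ hμ₂ hclose hw hne) ?_)
        rw [abs_mul, abs_of_nonneg (by positivity), one_div,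
          inv_mul_le_iff₀ (by exact_mod_cast hd)]
        exact hsum
    _ = 2 * δ := by ring

end Madogram

theorem madogram_cdf_stability (d : ℕ) (hd : 2 ≤ d)
    (μ₁ μ₂ : Measure (Fin d → ℝ)) [IsProbabilityMeasure μ₁] [IsProbabilityMeasure μ₂]
    (hμ₁ : μ₁ (Set.univ.pi fun _ : Fin d => Set.Icc (0:ℝ) 1)ᶜ = 0)
    (hμ₂ : μ₂ (Set.univ.pi fun _ : Fin d => Set.Icc (0:ℝ) 1)ᶜ = 0)
    (δ : ℝ)
    (hclose : ∀ u : Fin d → ℝ, (∀ i, u i ∈ Set.Icc (0:ℝ) 1) →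
      |cdf μ₁ u - cdf μ₂ u| ≤ δ)
    (w : Fin d → ℝ) (hw : ∀ i, 0 < w i ∧ w i ≤ 1) :
    |(∫ u, nuW d (by omega) w u ∂μ₁) - ∫ u, nuW d (by omega) w u ∂μ₂| ≤ 2 * δ := by
  rw [Set.pi_univ_Icc] at hμ₁ hμ₂
  exact abs_integral_nuW_sub_le (by omega) (mem_ae_iff.mpr hμ₁) (mem_ae_iff.mpr hμ₂)
    (fun u hu => hclose u fun i => ⟨hu.1 i, hu.2 i⟩) fun i => (hw i).1
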